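/- arXiv:1907.10742 — 3 statements merged into one kernel-verified Lean document; each statement's English description precedes it below -/
import Mathlib

section
/- Let G be (r,s)-robust with coloring and let G' be obtained from G by adding a new vertex u together with edges from u to at least three vertices of G having pairwise distinct colors. Then G' is (r,s)-robust with coloring. -/
variable {V : Type*} {Γ : Type*}

/-- Neighbors of `v` outside `S`. -/
def nOut (G : SimpleGraph V) (S : Set V) (v : V) : Set V :=
  {u | G.Adj v u ∧ u ∉ S}

/-- `v` is `r`-valid with respect to `S`: it has at least `r` neighbors outside `S`
sharing a common color, or two neighbors outside `S` with distinct colors. -/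
def RValid (G : SimpleGraph V) (C : V → Γ) (r : ℕ) (S : Set V) (v : V) : Prop :=
  (∃ c : Γ, r ≤ {u | u ∈ nOut G S v ∧ C u = c}.ncard) ∨
  (∃ u ∈ nOut G S v, ∃ w ∈ nOut G S v, C u ≠ C w)

/-- The set of `r`-valid nodes of `S`. -/
def validSet (G : SimpleGraph V) (C : V → Γ) (r : ℕ) (S : Set V) : Set V :=
  {v ∈ S | RValid G C r S v}

/-- All nodes of `S` share one color. -/
def MonoChromatic (C : V → Γ) (S : Set V) : Prop := ∀ u ∈ S, ∀ w ∈ S, C u = C w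

/-- `(r,s)`-robustness with coloring. -/
def RSRobustC (G : SimpleGraph V) (C : V → Γ) (r s : ℕ) : Prop :=
  ∀ S1 S2 : Set V, S1.Nonempty → S2.Nonempty → Disjoint S1 S2 →
    (validSet G C r S1).ncard = S1.ncard ∨
    (validSet G C r S2).ncard = S2.ncard ∨
    (MonoChromatic C (validSet G C r S1 ∪ validSet G C r S2) ∧
      s ≤ (validSet G C r S1 ∪ validSet G C r S2).ncard) ∨
    (∃ u ∈ validSet G C r S1 ∪ validSet G C r S2,
      ∃ w ∈ validSet G C r S1 ∪ validSet G C r S2, C u ≠ C w)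

/-- Classical `(r,s)`-robustness. -/
def RSRobust (G : SimpleGraph V) (r s : ℕ) : Prop :=
  ∀ S1 S2 : Set V, S1.Nonempty → S2.Nonempty → Disjoint S1 S2 →
    ({v ∈ S1 | r ≤ (nOut G S1 v).ncard}).ncard = S1.ncard ∨
    ({v ∈ S2 | r ≤ (nOut G S2 v).ncard}).ncard = S2.ncard ∨
    s ≤ ({v ∈ S1 | r ≤ (nOut G S1 v).ncard} ∪ {v ∈ S2 | r ≤ (nOut G S2 v).ncard}).ncard

/-- `v` has three neighbors outside `S` with pairwise distinct colors. -/
def ThreeDistinct (G : SimpleGraph V) (C : V → Γ) (S : Set V) (v : V) : Prop :=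
  ∃ a ∈ nOut G S v, ∃ b ∈ nOut G S v, ∃ c ∈ nOut G S v,
    C a ≠ C b ∧ C a ≠ C c ∧ C b ≠ C c

/-- `r`-robustness with coloring. -/
def RRobustC (G : SimpleGraph V) (C : V → Γ) (r : ℕ) : Prop :=
  ∀ S1 S2 : Set V, S1.Nonempty → S2.Nonempty → Disjoint S1 S2 →
    (∃ v ∈ S1, r ≤ (nOut G S1 v).ncard ∨ ThreeDistinct G C S1 v) ∨
    (∃ v ∈ S2, r ≤ (nOut G S2 v).ncard ∨ ThreeDistinct G C S2 v)

/-- Classical `r`-robustness. -/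
def RRobust (G : SimpleGraph V) (r : ℕ) : Prop :=
  ∀ S1 S2 : Set V, S1.Nonempty → S2.Nonempty → Disjoint S1 S2 →
    (∃ v ∈ S1, r ≤ (nOut G S1 v).ncard) ∨ (∃ v ∈ S2, r ≤ (nOut G S2 v).ncard)

/-- Mono-chromatic robustness. -/
def MonoRobust (G : SimpleGraph V) (C : V → Γ) : Prop :=
  ∀ S1 S2 : Set V, S1.Nonempty → S2.Nonempty → Disjoint S1 S2 →
    (∃ v ∈ S1, ThreeDistinct G C S1 v) ∨ (∃ v ∈ S2, ThreeDistinct G C S2 v)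

/-!
Restricting a pair `S₁, S₂` of vertex sets of `G'` to the old vertices gives a pair of `G`,
and `r`-validity only improves along the inclusion `G → G'`: an old vertex keeps all its
neighbours outside its set, with their colours. So each conclusion of robustness of `G`
lifts to `G'`, except that the new vertex `u = none` may be an invalid node of its set. But if
`u` is not `r`-valid, at most one of its three differently coloured neighbours lies outside its set,
so two of them, of distinct colours, lie inside it; being old vertices they are valid, and the
valid nodes are not mono-chromatic.
-/

lemma MonoChromatic.subset {C : V → Γ} {S T : Set V} (h : MonoChromatic C T) (hST : S ⊆ T) :
    MonoChromatic C S :=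
  fun x hx y hy => h x (hST hx) y (hST hy)

section Transfer

variable {W : Type*} {G : SimpleGraph V} {H : SimpleGraph W} {C : V → Γ} {D : W → Γ} {r : ℕ}

lemma validSet_subset (S : Set V) : validSet G C r S ⊆ S := fun _ hv => hv.1

lemma mapsTo_nOut (f : G →g H) (S : Set W) (v : V) :
    Set.MapsTo f (nOut G (f ⁻¹' S) v) (nOut H S (f v)) :=
  fun _ hx => ⟨f.map_adj hx.1, hx.2⟩

lemma RValid.map [Finite W] (f : G →g H) (hf : Function.Injective f)
    (hC : ∀ v, D (f v) = C v) {S : Set W} {v : V} (h : RValid G C r (f ⁻¹' S) v) :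
    RValid H D r S (f v) := by
  have hmaps := mapsTo_nOut f S v
  rcases h with ⟨c, hc⟩ | ⟨x, hx, y, hy, hxy⟩
  · refine Or.inl ⟨c, hc.trans ?_⟩
    rw [← Set.ncard_image_of_injective _ hf]
    refine Set.ncard_le_ncard ?_
    rintro _ ⟨x, ⟨hx, rfl⟩, rfl⟩
    exact ⟨hmaps hx, hC x⟩
  · exact Or.inr ⟨f x, hmaps hx, f y, hmaps hy, by rwa [hC, hC]⟩

lemma image_validSet_subset [Finite W] (f : G →g H) (hf : Function.Injective f)
    (hC : ∀ v, D (f v) = C v) (S : Set W) :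
    f '' validSet G C r (f ⁻¹' S) ⊆ validSet H D r S := by
  rintro _ ⟨v, hv, rfl⟩
  exact ⟨hv.1, hv.2.map f hf hC⟩

lemma image_validSet_union_subset [Finite W] (f : G →g H) (hf : Function.Injective f)
    (hC : ∀ v, D (f v) = C v) (S₁ S₂ : Set W) :
    f '' (validSet G C r (f ⁻¹' S₁) ∪ validSet G C r (f ⁻¹' S₂)) ⊆
      validSet H D r S₁ ∪ validSet H D r S₂ := by
  rw [Set.image_union]
  exact Set.union_subset_union (image_validSet_subset f hf hC S₁)
    (image_validSet_subset f hf hC S₂)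

lemma rValid_of_three_colors {u a b c : W} (ha : H.Adj u a) (hb : H.Adj u b)
    (hc : H.Adj u c) (hab : D a ≠ D b) (hac : D a ≠ D c) (hbc : D b ≠ D c) {S : Set W}
    (hS : S \ {u} ⊆ validSet H D r S) (hmono : MonoChromatic D (validSet H D r S)) :
    RValid H D r S u := by
  have inside {y z : W} (hy : H.Adj u y) (hz : H.Adj u z) (hyz : D y ≠ D z)
      (hyS : y ∈ S) (hzS : z ∈ S) : False :=
    hyz (hmono _ (hS ⟨hyS, hy.ne.symm⟩) _ (hS ⟨hzS, hz.ne.symm⟩))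
  have outside {y z : W} (hy : H.Adj u y) (hz : H.Adj u z) (hyz : D y ≠ D z)
      (hyS : y ∉ S) (hzS : z ∉ S) : RValid H D r S u :=
    Or.inr ⟨y, ⟨hy, hyS⟩, z, ⟨hz, hzS⟩, hyz⟩
  by_cases haS : a ∈ S
  · by_cases hbS : b ∈ S
    · exact (inside ha hb hab haS hbS).elim
    by_cases hcS : c ∈ S
    · exact (inside ha hc hac haS hcS).elim
    exact outside hb hc hbc hbS hcS
  · by_cases hbS : b ∈ S
    · by_cases hcS : c ∈ S
      · exact (inside hb hc hbc hbS hcS).elim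
      exact outside ha hc hac haS hcS
    exact outside ha hb hab haS hbS

lemma validSet_eq_of_validSet_preimage_eq [Finite W] (f : G →g H) (hf : Function.Injective f)
    (hC : ∀ v, D (f v) = C v) {u a b c : W} (hu : insert u (Set.range f) = Set.univ)
    (ha : H.Adj u a) (hb : H.Adj u b) (hc : H.Adj u c)
    (hab : D a ≠ D b) (hac : D a ≠ D c) (hbc : D b ≠ D c) {S : Set W}
    (heq : validSet G C r (f ⁻¹' S) = f ⁻¹' S) (hmono : MonoChromatic D (validSet H D r S)) :
    validSet H D r S = S := by
  have hS : S \ {u} ⊆ validSet H D r S := by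
    intro x hx
    obtain rfl | ⟨v, rfl⟩ := hu.superset (Set.mem_univ x)
    · exact (hx.2 rfl).elim
    · exact image_validSet_subset f hf hC S ⟨v, heq.superset hx.1, rfl⟩
  refine (validSet_subset S).antisymm fun x hx => ?_
  obtain rfl | hxu := eq_or_ne x u
  · exact ⟨hx, rValid_of_three_colors ha hb hc hab hac hbc hS hmono⟩
  · exact hS ⟨hx, hxu⟩

end Transfer

theorem rsRobustC_add_vertex_three_colors_general [Fintype V] (G : SimpleGraph V)
    (G' : SimpleGraph (Option V)) (C : V → Γ) (cu : Γ) (r s : ℕ)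
    (T : Set V) (a b c : V)
    (hadj : ∀ x y : V, G'.Adj (some x) (some y) ↔ G.Adj x y)
    (hadjU : ∀ x : V, G'.Adj none (some x) ↔ x ∈ T)
    (ha : a ∈ T) (hb : b ∈ T) (hc : c ∈ T)
    (hab : C a ≠ C b) (hac : C a ≠ C c) (hbc : C b ≠ C c)
    (hG : RSRobustC G C r s) :
    RSRobustC G' (fun x => x.elim cu C) r s := by
  set C' : Option V → Γ := fun x => x.elim cu C
  let f : G →g G' := ⟨some, (hadj _ _).2⟩
  have full {S' : Set (Option V)} (heq : validSet G C r (some ⁻¹' S') = some ⁻¹' S')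
      (hmono : MonoChromatic C' (validSet G' C' r S')) :
      (validSet G' C' r S').ncard = S'.ncard :=
    congrArg _ (validSet_eq_of_validSet_preimage_eq f (Option.some_injective V) (fun _ => rfl)
      (Set.insert_none_range_some V) ((hadjU a).2 ha) ((hadjU b).2 hb) ((hadjU c).2 hc)
      hab hac hbc heq hmono)
  intro S₁ S₂ _ _ hdisj
  by_cases hmono : MonoChromatic C' (validSet G' C' r S₁ ∪ validSet G' C' r S₂)
  swap
  · exact Or.inr (Or.inr (Or.inr (by simpa [MonoChromatic] using hmono)))
  have full₁ h := full h (hmono.subset Set.subset_union_left)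
  have full₂ h := full h (hmono.subset Set.subset_union_right)
  rcases (some ⁻¹' S₁).eq_empty_or_nonempty with h₁ | h₁
  · exact Or.inl (full₁ (by rw [h₁]; exact Set.sep_empty _))
  rcases (some ⁻¹' S₂).eq_empty_or_nonempty with h₂ | h₂
  · exact Or.inr (Or.inl (full₂ (by rw [h₂]; exact Set.sep_empty _)))
  have hU := image_validSet_union_subset (C := C) (D := C') (r := r) f
    (Option.some_injective V) (fun _ => rfl) S₁ S₂
  rcases hG _ _ h₁ h₂ (hdisj.preimage some) with
    h | h | ⟨-, hcard⟩ | ⟨x, hx, y, hy, hxy⟩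
  · exact Or.inl (full₁ (Set.eq_of_subset_of_ncard_le (validSet_subset _) h.ge))
  · exact Or.inr (Or.inl (full₂ (Set.eq_of_subset_of_ncard_le (validSet_subset _) h.ge)))
  · refine Or.inr (Or.inr (Or.inl ⟨hmono, hcard.trans ?_⟩))
    rw [← Set.ncard_image_of_injective _ (Option.some_injective V)]
    exact Set.ncard_le_ncard hU
  · exact Or.inr (Or.inr (Or.inr
      ⟨some x, hU ⟨x, hx, rfl⟩, some y, hU ⟨y, hy, rfl⟩, hxy⟩))

theorem rsRobustC_add_vertex_three_colors [Fintype V] (G : SimpleGraph V)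
    (G' : SimpleGraph (Option V)) (C : V → Γ) (cu : Γ) (r s : ℕ)
    (hr : 1 < r) (hs : 1 < s) (T : Set V) (a b c : V)
    (hadj : ∀ x y : V, G'.Adj (some x) (some y) ↔ G.Adj x y)
    (hadjU : ∀ x : V, G'.Adj none (some x) ↔ x ∈ T)
    (ha : a ∈ T) (hb : b ∈ T) (hc : c ∈ T)
    (hab : C a ≠ C b) (hac : C a ≠ C c) (hbc : C b ≠ C c)
    (hG : RSRobustC G C r s) :
    RSRobustC G' (fun x => x.elim cu C) r s :=
  rsRobustC_add_vertex_three_colors_general G G' C cu r s T a b c hadj hadjU ha hb hc hab hac hbc hG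
end

section
/- Let G be r-robust with coloring and let G' be obtained from G by adding a new vertex u adjacent to at least r vertices of G (of any colors). Then G' is r-robust with coloring. -/
variable {V : Type*} {Γ : Type*}

/-!
Robustness passes from `G` to any graph `G'` containing it as an induced subgraph in which every
other vertex has at least `r` neighbors in `G`. If two disjoint sets of `G'` both meet `G`, a
witness in `G` for their traces is still one in `G'`, since neighbors outside a set only gain
along an embedding. A nonempty set missing `G` has a vertex all of whose `≥ r` neighbors in `G`
lie outside it.
-/

section

variable {W : Type*} {G : SimpleGraph V} {G' : SimpleGraph W}

theorem image_nOut_preimage_subset (f : G →g G') (S : Set W) (v : V) :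
    f '' nOut G (f ⁻¹' S) v ⊆ nOut G' S (f v) := by
  rintro _ ⟨w, ⟨hvw, hw⟩, rfl⟩
  exact ⟨f.map_adj hvw, hw⟩

theorem ncard_nOut_preimage_le [Finite W] (f : G ↪g G') (S : Set W) (v : V) :
    (nOut G (f ⁻¹' S) v).ncard ≤ (nOut G' S (f v)).ncard :=
  calc (nOut G (f ⁻¹' S) v).ncard
      = (f '' nOut G (f ⁻¹' S) v).ncard := (Set.ncard_image_of_injective _ f.injective).symm
    _ ≤ (nOut G' S (f v)).ncard := Set.ncard_le_ncard (image_nOut_preimage_subset f.toHom S v)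

theorem ThreeDistinct.of_preimage {C : V → Γ} {C' : W → Γ} (f : G →g G')
    (hC : ∀ a, C' (f a) = C a) {S : Set W} {v : V} (h : ThreeDistinct G C (f ⁻¹' S) v) :
    ThreeDistinct G' C' S (f v) := by
  obtain ⟨a, ha, b, hb, c, hc, hab, hac, hbc⟩ := h
  have hsub := image_nOut_preimage_subset f S v
  exact ⟨f a, hsub ⟨a, ha, rfl⟩, f b, hsub ⟨b, hb, rfl⟩, f c, hsub ⟨c, hc, rfl⟩,
    by rwa [hC, hC], by rwa [hC, hC], by rwa [hC, hC]⟩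

theorem RRobustC.of_embedding [Finite W] {C : V → Γ} {C' : W → Γ} {r : ℕ} (f : G ↪g G')
    (hC : ∀ a, C' (f a) = C a)
    (hnew : ∀ x ∉ Set.range f, r ≤ (G'.neighborSet x ∩ Set.range f).ncard)
    (hG : RRobustC G C r) : RRobustC G' C' r := by
  have transfer : ∀ S : Set W, (∃ v ∈ f ⁻¹' S, r ≤ (nOut G (f ⁻¹' S) v).ncard ∨
      ThreeDistinct G C (f ⁻¹' S) v) →
      ∃ x ∈ S, r ≤ (nOut G' S x).ncard ∨ ThreeDistinct G' C' S x := by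
    rintro S ⟨v, hv, hcard | hthree⟩
    · exact ⟨f v, hv, .inl (hcard.trans (ncard_nOut_preimage_le f S v))⟩
    · exact ⟨f v, hv, .inr (hthree.of_preimage f.toHom hC)⟩
  have outside : ∀ S : Set W, S.Nonempty → ¬ (f ⁻¹' S).Nonempty →
      ∃ x ∈ S, r ≤ (nOut G' S x).ncard ∨ ThreeDistinct G' C' S x := by
    rintro S ⟨x, hx⟩ hS
    have hxf : x ∉ Set.range f := by
      rintro ⟨v, rfl⟩
      exact hS ⟨v, hx⟩
    have hsub : G'.neighborSet x ∩ Set.range f ⊆ nOut G' S x := by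
      rintro _ ⟨hadj, v, rfl⟩
      exact ⟨hadj, fun hv => hS ⟨v, hv⟩⟩
    exact ⟨x, hx, .inl ((hnew x hxf).trans (Set.ncard_le_ncard hsub))⟩
  intro S1 S2 h1 h2 hdisj
  by_cases he1 : (f ⁻¹' S1).Nonempty
  · by_cases he2 : (f ⁻¹' S2).Nonempty
    · exact (hG _ _ he1 he2 (hdisj.preimage f)).imp (transfer S1) (transfer S2)
    · exact .inr (outside S2 h2 he2)
  · exact .inl (outside S1 h1 he1)

end

theorem rRobustC_add_vertex [Fintype V] (G : SimpleGraph V)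
    (G' : SimpleGraph (Option V)) (C : V → Γ) (cu : Γ) (r : ℕ) (T : Set V)
    (hadj : ∀ a b : V, G'.Adj (some a) (some b) ↔ G.Adj a b)
    (hadjU : ∀ a : V, G'.Adj none (some a) ↔ a ∈ T)
    (hTcard : r ≤ T.ncard)
    (hG : RRobustC G C r) :
    RRobustC G' (fun x => x.elim cu C) r := by
  let f : G ↪g G' := ⟨⟨some, Option.some_injective V⟩, hadj _ _⟩
  refine hG.of_embedding f (fun _ => rfl) ?_
  rintro (_ | v) hx
  · have hnbr : G'.neighborSet none ∩ Set.range f = some '' T := by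
      ext x
      cases x <;> simp [f, hadjU]
    rw [hnbr, Set.ncard_image_of_injective _ (Option.some_injective V)]
    exact hTcard
  · exact absurd ⟨v, rfl⟩ hx
end

section
/- Let G' be obtained from a mono-chromatic robust colored graph G by adding a new vertex u adjacent to at least three vertices of G with pairwise distinct colors (u assigned any color). Then G' is mono-chromatic robust. -/
variable {V : Type*} {Γ : Type*}

/-! Every vertex of `G'` outside the image of `G` sees three colours inside that image. So a
nonempty set avoiding the image has a vertex with three differently coloured neighbours outside
it; and if both sets meet the image, robustness of `G` applies to their preimages. -/

section

variable {W : Type*} {G : SimpleGraph V} {G' : SimpleGraph W} {C' : W → Γ}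

theorem ThreeDistinct.anti {C : V → Γ} {S T : Set V} {v : V} (hST : S ⊆ T)
    (h : ThreeDistinct G C T v) : ThreeDistinct G C S v := by
  obtain ⟨a, ⟨hva, haT⟩, b, ⟨hvb, hbT⟩, c, ⟨hvc, hcT⟩, hab, hac, hbc⟩ := h
  exact ⟨a, ⟨hva, fun haS => haT (hST haS)⟩, b, ⟨hvb, fun hbS => hbT (hST hbS)⟩,
    c, ⟨hvc, fun hcS => hcT (hST hcS)⟩, hab, hac, hbc⟩

theorem ThreeDistinct.map (f : G →g G') {S : Set W} {v : V}
    (h : ThreeDistinct G (C' ∘ f) (f ⁻¹' S) v) : ThreeDistinct G' C' S (f v) := by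
  obtain ⟨a, ⟨hva, haS⟩, b, ⟨hvb, hbS⟩, c, ⟨hvc, hcS⟩, hab, hac, hbc⟩ := h
  exact ⟨f a, ⟨f.map_adj hva, haS⟩, f b, ⟨f.map_adj hvb, hbS⟩, f c, ⟨f.map_adj hvc, hcS⟩,
    hab, hac, hbc⟩

theorem MonoRobust.of_hom (f : G →g G')
    (hnew : ∀ w ∉ Set.range f, ThreeDistinct G' C' (Set.range f)ᶜ w)
    (hG : MonoRobust G (C' ∘ f)) : MonoRobust G' C' := by
  have avoiding : ∀ S : Set W, S.Nonempty → f ⁻¹' S = ∅ → ∃ w ∈ S, ThreeDistinct G' C' S w := by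
    rintro S ⟨w, hw⟩ hS
    have hSc : S ⊆ (Set.range f)ᶜ :=
      Set.subset_compl_iff_disjoint_right.2 (Set.preimage_eq_empty_iff.1 hS)
    exact ⟨w, hw, (hnew w (hSc hw)).anti hSc⟩
  intro S₁ S₂ hS₁ hS₂ hdisj
  rcases (f ⁻¹' S₁).eq_empty_or_nonempty with h₁ | h₁
  · exact Or.inl (avoiding S₁ hS₁ h₁)
  rcases (f ⁻¹' S₂).eq_empty_or_nonempty with h₂ | h₂
  · exact Or.inr (avoiding S₂ hS₂ h₂)
  rcases hG _ _ h₁ h₂ (hdisj.preimage f) with ⟨v, hv, h⟩ | ⟨v, hv, h⟩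
  · exact Or.inl ⟨f v, hv, h.map f⟩
  · exact Or.inr ⟨f v, hv, h.map f⟩

end

theorem monoRobust_add_vertex_three_colors_general (G : SimpleGraph V)
    (G' : SimpleGraph (Option V)) (C : V → Γ) (cu : Γ) (T : Set V)
    (a b c : V)
    (hadj : ∀ x y : V, G'.Adj (some x) (some y) ↔ G.Adj x y)
    (hadjU : ∀ x : V, G'.Adj none (some x) ↔ x ∈ T)
    (ha : a ∈ T) (hb : b ∈ T) (hc : c ∈ T)
    (hab : C a ≠ C b) (hac : C a ≠ C c) (hbc : C b ≠ C c)
    (hG : MonoRobust G C) :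
    MonoRobust G' (fun x => x.elim cu C) := by
  let embed : G →g G' := ⟨some, (hadj _ _).2⟩
  have inRange : ∀ x, some x ∉ (Set.range embed)ᶜ := fun x hx => hx ⟨x, rfl⟩
  refine MonoRobust.of_hom embed ?_ hG
  rintro (_ | x) hw
  · exact ⟨some a, ⟨(hadjU a).2 ha, inRange a⟩, some b, ⟨(hadjU b).2 hb, inRange b⟩,
      some c, ⟨(hadjU c).2 hc, inRange c⟩, hab, hac, hbc⟩
  · exact absurd ⟨x, rfl⟩ hw

theorem monoRobust_add_vertex_three_colors [Fintype V] (G : SimpleGraph V)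
    (G' : SimpleGraph (Option V)) (C : V → Γ) (cu : Γ) (T : Set V)
    (a b c : V)
    (hadj : ∀ x y : V, G'.Adj (some x) (some y) ↔ G.Adj x y)
    (hadjU : ∀ x : V, G'.Adj none (some x) ↔ x ∈ T)
    (ha : a ∈ T) (hb : b ∈ T) (hc : c ∈ T)
    (hab : C a ≠ C b) (hac : C a ≠ C c) (hbc : C b ≠ C c)
    (hG : MonoRobust G C) :
    MonoRobust G' (fun x => x.elim cu C) :=
  monoRobust_add_vertex_three_colors_general G G' C cu T a b c hadj hadjU ha hb hc hab hac hbc hG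
end
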